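/- arXiv:2308.16194 — 4 statements merged into one kernel-verified Lean document; each statement's English description precedes it below -/
import Mathlib

section
/- Let c : Fin p → ℕ be a nonincreasing sequence of positive integers. Define the har-index as the largest k with 1 ≤ k ≤ p such that ∑_{j=1}^{k} 1/c_j ≤ 1 (har = 0 if no such k exists). Then h ≤ har, where h is the Hirsch index. -/
/-- The Hirsch index `h` is at most the harmonic index `har`. -/
theorem stmt_2 (p : ℕ) (c : Fin p → ℕ) (hmono : Antitone c) (hpos : ∀ i, 0 < c i)
    (h har : ℕ)
    (hh : h = sSup {m : ℕ | 1 ≤ m ∧ m ≤ p ∧ ∃ hm : m - 1 < p, m ≤ c ⟨m - 1, hm⟩})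
    (hhar : har = sSup {k : ℕ | 1 ≤ k ∧ k ≤ p ∧
      ∑ j ∈ Finset.univ.filter (fun j : Fin p => (j : ℕ) < k), (1 : ℝ) / (c j) ≤ 1}) :
    h ≤ har := by
  subst hh hhar
  set S : Set ℕ := {m : ℕ | 1 ≤ m ∧ m ≤ p ∧ ∃ hm : m - 1 < p, m ≤ c ⟨m - 1, hm⟩} with hS
  set T : Set ℕ := {k : ℕ | 1 ≤ k ∧ k ≤ p ∧
      ∑ j ∈ Finset.univ.filter (fun j : Fin p => (j : ℕ) < k), (1 : ℝ) / (c j) ≤ 1} with hT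
  have hsub : S ⊆ T := by
    rintro m ⟨h1, h2, hm, hcm⟩
    refine ⟨h1, h2, ?_⟩
    have hset : Finset.univ.filter (fun j : Fin p => (j : ℕ) < m)
        = Finset.Iic (⟨m - 1, hm⟩ : Fin p) := by
      ext j
      simp [Fin.le_def, Nat.lt_iff_le_pred h1]
    rw [hset]
    have hmpos : (0 : ℝ) < (m : ℝ) := by exact_mod_cast h1
    have hone : ∀ j ∈ Finset.Iic (⟨m - 1, hm⟩ : Fin p), (1 : ℝ) / (c j) ≤ 1 / m := by
      intro j hj
      apply one_div_le_one_div_of_le hmpos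
      have hcj : m ≤ c j := le_trans hcm (hmono (Finset.mem_Iic.mp hj))
      exact_mod_cast hcj
    calc ∑ j ∈ Finset.Iic (⟨m - 1, hm⟩ : Fin p), (1 : ℝ) / (c j)
        ≤ ∑ _j ∈ Finset.Iic (⟨m - 1, hm⟩ : Fin p), (1 : ℝ) / m := Finset.sum_le_sum hone
      _ = ((Finset.Iic (⟨m - 1, hm⟩ : Fin p)).card : ℝ) * (1 / m) := by
          rw [Finset.sum_const, nsmul_eq_mul]
      _ = (m : ℝ) * (1 / m) := by
          rw [Fin.card_Iic]
          have hv : ((⟨m - 1, hm⟩ : Fin p) : ℕ) + 1 = m := by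
            simp only [Fin.val_mk]
            omega
          rw [hv]
      _ = 1 := by field_simp
  rcases Set.eq_empty_or_nonempty S with hE | hNE
  · rw [hE]
    simp
  · exact csSup_le_csSup ⟨p, fun x hx => hx.2.1⟩ hNE hsub
end

section
/- Let c : Fin p → ℕ be a nonincreasing sequence of positive integers. Define har as the largest k ≤ p with ∑_{j=1}^{k} 1/c_j ≤ 1, and define g as the largest k ≤ p with ∑_{j=1}^{k} c_j ≥ k² (the Egghe g-index, assuming such k exists). Then har ≤ g. -/
lemma card_filter_lt_aux (p k : ℕ) (hk : k ≤ p) :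
    (Finset.univ.filter (fun j : Fin p => (j : ℕ) < k)).card = k := by
  apply Finset.card_eq_of_bijective (fun i hi => ⟨i, lt_of_lt_of_le hi hk⟩)
  · rintro ⟨a, ha⟩ h
    simp only [Finset.mem_filter] at h
    exact ⟨a, h.2, rfl⟩
  · intro i hi; simp [hi]
  · intro i j hi hj h
    simpa using congrArg Fin.val h

lemma harm_to_g_aux (p k : ℕ) (c : Fin p → ℕ) (hpos : ∀ i, 0 < c i)
    (s : Finset (Fin p)) (hcard : s.card = k)
    (hsum : ∑ j ∈ s, (1 : ℝ) / (c j) ≤ 1) :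
    k ^ 2 ≤ ∑ j ∈ s, c j := by
  have key : ((k : ℝ)) ^ 2 ≤ (∑ j ∈ s, (c j : ℝ)) * ∑ j ∈ s, (1 : ℝ) / (c j) := by
    have := Finset.sum_sq_le_sum_mul_sum_of_sq_eq_mul s
      (r := fun _ => (1 : ℝ)) (f := fun j => (c j : ℝ)) (g := fun j => (1 : ℝ) / (c j))
      (fun i _ => by positivity) (fun i _ => by positivity)
      (fun i _ => by
        have : (c i : ℝ) ≠ 0 := Nat.cast_ne_zero.2 (hpos i).ne'
        field_simp)
    simpa [hcard] using this
  have h2 : ((k : ℝ)) ^ 2 ≤ ∑ j ∈ s, (c j : ℝ) := by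
    calc ((k : ℝ)) ^ 2 ≤ (∑ j ∈ s, (c j : ℝ)) * ∑ j ∈ s, (1 : ℝ) / (c j) := key
    _ ≤ (∑ j ∈ s, (c j : ℝ)) * 1 := by
        apply mul_le_mul_of_nonneg_left hsum (Finset.sum_nonneg fun i _ => by positivity)
    _ = _ := mul_one _
  exact_mod_cast (by push_cast at h2 ⊢; exact h2 : ((k:ℝ))^2 ≤ ((∑ j ∈ s, c j : ℕ) : ℝ))

/-- The harmonic index `har` is at most the Egghe `g`-index. -/
theorem stmt_4 (p : ℕ) (c : Fin p → ℕ) (hmono : Antitone c) (hpos : ∀ i, 0 < c i)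
    (har g : ℕ)
    (hhar : har = sSup {k : ℕ | 1 ≤ k ∧ k ≤ p ∧
      ∑ j ∈ Finset.univ.filter (fun j : Fin p => (j : ℕ) < k), (1 : ℝ) / (c j) ≤ 1})
    (hg : IsGreatest {k : ℕ | 1 ≤ k ∧ k ≤ p ∧
      k ^ 2 ≤ ∑ j ∈ Finset.univ.filter (fun j : Fin p => (j : ℕ) < k), c j} g) :
    har ≤ g := by
  rw [hhar]
  apply csSup_le'
  rintro k ⟨hk1, hkp, hsum⟩
  exact hg.2 ⟨hk1, hkp, harm_to_g_aux p k c hpos _ (card_filter_lt_aux p k hkp) hsum⟩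
end

section
/- Let c : Fin p → ℕ be a nonincreasing sequence of positive integers with Hirsch index h ≥ 1. Define A = (∑_{j=1}^{h} c_j)/h (Jin's A-index, as a real number) and g the Egghe g-index. Then g ≤ A. -/
/-!
Since `c j ≥ h` for `j < h` and `c j ≤ h` for `j ≥ h`, the excess `∑_{j<k} c_j - k h` is largest
at `k = h`, where it equals `A h - h²`. At `k = g` this gives `g² - g h ≤ A h - h²`, and adding
`(g - h)² ≥ 0` yields `g h ≤ A h`.
-/

open Finset

theorem Finset.sum_filter_le_sum_filter_of_sign {ι M : Type*} [AddCommMonoid M] [PartialOrder M]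
    [IsOrderedAddMonoid M] (s : Finset ι) (P Q : ι → Prop) [DecidablePred P] [DecidablePred Q]
    (f : ι → M) (hQ : ∀ i ∈ s, Q i → ¬P i → 0 ≤ f i) (hP : ∀ i ∈ s, P i → ¬Q i → f i ≤ 0) :
    ∑ i ∈ s with P i, f i ≤ ∑ i ∈ s with Q i, f i := by
  rw [sum_filter, sum_filter]
  refine sum_le_sum fun i hi => ?_
  by_cases hPi : P i <;> by_cases hQi : Q i <;> simp [hPi, hQi, hQ i hi, hP i hi]

def hirschSet {p : ℕ} (c : Fin p → ℕ) : Set ℕ :=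
  {m : ℕ | 1 ≤ m ∧ m ≤ p ∧ ∃ hm : m - 1 < p, m ≤ c ⟨m - 1, hm⟩}

section Hirsch

variable {p : ℕ} {c : Fin p → ℕ} {h : ℕ}

theorem le_apply_of_mem_hirschSet (hmono : Antitone c) (hh : h ∈ hirschSet c) {j : Fin p}
    (hj : (j : ℕ) < h) : h ≤ c j := by
  obtain ⟨-, -, _, hch⟩ := hh
  exact hch.trans (hmono (Fin.le_def.2 (by simp only; omega)))

theorem apply_le_of_mem_upperBounds_hirschSet (hmono : Antitone c)
    (hh : h ∈ upperBounds (hirschSet c)) {j : Fin p} (hj : h ≤ (j : ℕ)) : c j ≤ h := by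
  by_contra! hcj
  have hhp : h < p := hj.trans_lt j.is_lt
  have : h + 1 ∈ hirschSet c :=
    ⟨by omega, hhp, by simpa using hhp, hcj.trans_le (hmono (Fin.le_def.2 (by simpa using hj)))⟩
  exact absurd (hh this) (by omega)

theorem sum_filter_val_lt_sub_le_of_isGreatest_hirschSet (hmono : Antitone c)
    (hh : IsGreatest (hirschSet c) h) {k : ℕ} (hk : k ≤ p) :
    ∑ j : Fin p with j.val < k, (c j : ℝ) - k * h ≤
      ∑ j : Fin p with j.val < h, (c j : ℝ) - h * h := by
  have hsign := sum_filter_le_sum_filter_of_sign univ (fun j : Fin p => (j : ℕ) < k)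
    (fun j : Fin p => (j : ℕ) < h) (fun j => (c j : ℝ) - h)
    (fun j _ hj _ => sub_nonneg.2 (by exact_mod_cast le_apply_of_mem_hirschSet hmono hh.1 hj))
    (fun j _ _ hj => sub_nonpos.2
      (by exact_mod_cast apply_le_of_mem_upperBounds_hirschSet hmono hh.2 (not_lt.1 hj)))
  simpa only [sum_sub_distrib, sum_const, nsmul_eq_mul, Fin.card_filter_val_lt,
    min_eq_right hk, min_eq_right hh.1.2.1] using hsign

end Hirsch

theorem stmt_6_general (p : ℕ) (c : Fin p → ℕ) (hmono : Antitone c)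
    (h g : ℕ) (hh1 : 1 ≤ h)
    (hh : IsGreatest {m : ℕ | 1 ≤ m ∧ m ≤ p ∧ ∃ hm : m - 1 < p, m ≤ c ⟨m - 1, hm⟩} h)
    (hg : IsGreatest {k : ℕ | 1 ≤ k ∧ k ≤ p ∧
      k ^ 2 ≤ ∑ j ∈ Finset.univ.filter (fun j : Fin p => (j : ℕ) < k), c j} g)
    (A : ℝ)
    (hA : A = (∑ j ∈ Finset.univ.filter (fun j : Fin p => (j : ℕ) < h), (c j : ℝ)) / h) :
    (g : ℝ) ≤ A := by
  obtain ⟨⟨-, hgp, hg_sq⟩, -⟩ := hg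
  have hh0 : (0 : ℝ) < h := by exact_mod_cast hh1
  have hAh : A * h = ∑ j : Fin p with j.val < h, (c j : ℝ) := by
    rw [hA, div_mul_cancel₀ _ hh0.ne']
  have hg_sq' : (g : ℝ) ^ 2 ≤ ∑ j : Fin p with j.val < g, (c j : ℝ) := by exact_mod_cast hg_sq
  have hexcess := sum_filter_val_lt_sub_le_of_isGreatest_hirschSet hmono hh hgp
  refine le_of_mul_le_mul_right ?_ hh0
  nlinarith [sq_nonneg ((g : ℝ) - h)]

/-- The Egghe `g`-index is at most Jin's `A`-index. -/
theorem stmt_6 (p : ℕ) (c : Fin p → ℕ) (hmono : Antitone c) (hpos : ∀ i, 0 < c i)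
    (h g : ℕ) (hh1 : 1 ≤ h)
    (hh : IsGreatest {m : ℕ | 1 ≤ m ∧ m ≤ p ∧ ∃ hm : m - 1 < p, m ≤ c ⟨m - 1, hm⟩} h)
    (hg : IsGreatest {k : ℕ | 1 ≤ k ∧ k ≤ p ∧
      k ^ 2 ≤ ∑ j ∈ Finset.univ.filter (fun j : Fin p => (j : ℕ) < k), c j} g)
    (A : ℝ)
    (hA : A = (∑ j ∈ Finset.univ.filter (fun j : Fin p => (j : ℕ) < h), (c j : ℝ)) / h) :
    (g : ℝ) ≤ A :=
  stmt_6_general p c hmono h g hh1 hh hg A hA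
end

section
/- Let c : Fin p → ℕ be a nonincreasing sequence of positive integers with harmonic index har < p, and suppose citations at indices in a subset J ⊆ {1,...,har} are each increased (index j increased by k_j ≥ 1 with the new value c_j + k_j, assumed to keep the sequence valid). If ∑_{j=1}^{har} 1/c_j + 1/c_{har+1} − ∑_{j∈J} k_j/(c_j(c_j + k_j)) ≤ 1, then the harmonic index of the new sequence is at least har + 1. -/
/-! Raising `c j` to `c j + k j` lowers the reciprocal sum by exactly
`1 / c j - 1 / (c j + k j) = k j / (c j * (c j + k j))`. Since every raised index lies below `har`,
the first `har + 1` reciprocals of the new sequence sum to the left-hand side of the hypothesis,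
which is at most `1`; so `har + 1` is admissible for the new sequence. -/

open Finset

lemma sum_one_div_ite_add {ι : Type*} [DecidableEq ι] {s J : Finset ι} (hJs : J ⊆ s) {c k : ι → ℝ}
    (hc : ∀ j ∈ J, c j ≠ 0) (hck : ∀ j ∈ J, c j + k j ≠ 0) :
    ∑ i ∈ s, 1 / (if i ∈ J then c i + k i else c i) =
      ∑ i ∈ s, 1 / c i - ∑ j ∈ J, k j / (c j * (c j + k j)) := by
  have hdrop : ∑ i ∈ s, (1 / c i - 1 / (if i ∈ J then c i + k i else c i)) =
      ∑ j ∈ J, (1 / c j - 1 / (c j + k j)) := by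
    rw [← sum_subset hJs fun i _ hi => by simp [hi]]
    exact sum_congr rfl fun j hj => by rw [if_pos hj]
  have hterm : ∀ j ∈ J, 1 / c j - 1 / (c j + k j) = k j / (c j * (c j + k j)) := by
    intro j hj
    field_simp [hc j hj, hck j hj]
    ring
  rw [← sum_congr rfl hterm, ← hdrop, sum_sub_distrib]
  ring

lemma Fin.sum_filter_val_lt_succ {M : Type*} [AddCommMonoid M] {p n : ℕ} (hn : n < p)
    (f : Fin p → M) :
    ∑ i ∈ univ.filter (fun i : Fin p => (i : ℕ) < n + 1), f i =
      ∑ i ∈ univ.filter (fun i : Fin p => (i : ℕ) < n), f i + f ⟨n, hn⟩ := by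
  have hinsert : univ.filter (fun i : Fin p => (i : ℕ) < n + 1) =
      insert ⟨n, hn⟩ (univ.filter (fun i : Fin p => (i : ℕ) < n)) := by
    ext i
    simp only [mem_insert, mem_filter, mem_univ, true_and, Fin.ext_iff]
    omega
  rw [hinsert, sum_insert (by simp), add_comm]

theorem stmt_15_general (p : ℕ) (c : Fin p → ℕ) (hpos : ∀ i, 0 < c i)
    (har : ℕ)
    (hlt : har < p)
    (J : Finset (Fin p)) (hJ : ∀ j ∈ J, (j : ℕ) < har)
    (k : Fin p → ℕ)
    (c' : Fin p → ℕ) (hc' : c' = fun i => if i ∈ J then c i + k i else c i)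
    (hcond : (∑ i ∈ Finset.univ.filter (fun i : Fin p => (i : ℕ) < har), (1 : ℝ) / (c i)) +
        1 / (c ⟨har, hlt⟩ : ℝ) -
        ∑ j ∈ J, (k j : ℝ) / ((c j : ℝ) * ((c j : ℝ) + (k j : ℝ))) ≤ 1) :
    har + 1 ≤ sSup {m : ℕ | 1 ≤ m ∧ m ≤ p ∧
      ∑ i ∈ Finset.univ.filter (fun i : Fin p => (i : ℕ) < m), (1 : ℝ) / (c' i) ≤ 1} := by
  have hJs : J ⊆ univ.filter (fun i : Fin p => (i : ℕ) < har + 1) := fun j hj => by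
    simpa using (hJ j hj).trans (Nat.lt_succ_self har)
  have hcpos : ∀ j, (0 : ℝ) < c j := fun j => by exact_mod_cast hpos j
  have hckpos : ∀ j, (0 : ℝ) < c j + k j := fun j =>
    add_pos_of_pos_of_nonneg (hcpos j) (k j).cast_nonneg
  have hsum : ∑ i ∈ univ.filter (fun i : Fin p => (i : ℕ) < har + 1), (1 : ℝ) / (c' i) ≤ 1 := by
    simp only [hc', Nat.cast_ite, Nat.cast_add]
    rwa [sum_one_div_ite_add hJs (fun j _ => (hcpos j).ne') (fun j _ => (hckpos j).ne'),
      Fin.sum_filter_val_lt_succ hlt]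
  exact le_csSup ⟨p, fun m hm => hm.2.1⟩ ⟨Nat.le_add_left 1 har, hlt, hsum⟩

/-- If citations in a subset `J` of the `har`-core are increased by `k j` each,
and the stated condition holds, the harmonic index of the new sequence is at
least `har + 1`. -/
theorem stmt_15 (p : ℕ) (c : Fin p → ℕ) (hmono : Antitone c) (hpos : ∀ i, 0 < c i)
    (har : ℕ)
    (hhar : IsGreatest {k : ℕ | 1 ≤ k ∧ k ≤ p ∧
      ∑ i ∈ Finset.univ.filter (fun i : Fin p => (i : ℕ) < k), (1 : ℝ) / (c i) ≤ 1} har)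
    (hlt : har < p)
    (J : Finset (Fin p)) (hJ : ∀ j ∈ J, (j : ℕ) < har)
    (k : Fin p → ℕ) (hk : ∀ j ∈ J, 1 ≤ k j)
    (c' : Fin p → ℕ) (hc' : c' = fun i => if i ∈ J then c i + k i else c i)
    (hmono' : Antitone c')
    (hcond : (∑ i ∈ Finset.univ.filter (fun i : Fin p => (i : ℕ) < har), (1 : ℝ) / (c i)) +
        1 / (c ⟨har, hlt⟩ : ℝ) -
        ∑ j ∈ J, (k j : ℝ) / ((c j : ℝ) * ((c j : ℝ) + (k j : ℝ))) ≤ 1) :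
    har + 1 ≤ sSup {m : ℕ | 1 ≤ m ∧ m ≤ p ∧
      ∑ i ∈ Finset.univ.filter (fun i : Fin p => (i : ℕ) < m), (1 : ℝ) / (c' i) ≤ 1} :=
  stmt_15_general p c hpos har hlt J hJ k c' hc' hcond
end
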